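/- Let T(x,y) = Σ_{n≥1} (Σ_{i≥1} c(n,i) y^i) x^n, viewed as a formal power series in x with coefficients in the polynomial ring ℤ[y]. Then (1 - (4 + 3y + y²)·x + (3 - 7y + 3y² + y³)·x²) · T(x,y) = 2y(1 + 3y)·x - 2y(3 - 7y + 4y²)·x². Equivalently, T(x,y) equals the rational function 2xy(1 + 3y - x(3 - 7y + 4y²)) / (1 - x(4 + 3y + y²) + x²(3 - 7y + 3y² + y³)). -/

import Mathlib

open SimpleGraph Polynomial

/-- A 2-colored partition of a simple graph `G`: a partition of the vertex set into
nonempty parts, each inducing a connected subgraph, together with an assignment of one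
of two colors to each part such that distinct parts joined by an edge get different colors. -/
structure TwoColoredPartition {V : Type*} (G : SimpleGraph V) where
  parts : Set (Set V)
  nonempty : ∀ p ∈ parts, p.Nonempty
  covers : ∀ v : V, ∃ p, p ∈ parts ∧ v ∈ p
  disj : ∀ p ∈ parts, ∀ q ∈ parts, p ≠ q → Disjoint p q
  conn : ∀ p ∈ parts, (G.induce p).Connected
  color : parts → Fin 2
  proper : ∀ p q : parts, p ≠ q →
    (∃ v ∈ (p : Set V), ∃ w ∈ (q : Set V), G.Adj v w) → color p ≠ color q

/-- The size of a 2-colored partition: its number of parts. -/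
noncomputable def TwoColoredPartition.size {V : Type*} {G : SimpleGraph V}
    (T : TwoColoredPartition G) : ℕ :=
  T.parts.ncard

/-- `c n i` is the number of 2-colored partitions of `K₃ × Pₙ` of size `i`. -/
noncomputable def c (n i : ℕ) : ℕ :=
  Nat.card {T : TwoColoredPartition ((⊤ : SimpleGraph (Fin 3)) □ pathGraph n) // T.size = i}

/-- `tpoly n = ∑_{i ≥ 1} c(n,i) yⁱ ∈ ℤ[y]`. -/
noncomputable def tpoly (n : ℕ) : Polynomial ℤ :=
  ∑ᶠ (i : ℕ) (_ : 1 ≤ i), Polynomial.monomial i (c n i : ℤ)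

/-- `T(x,y) = ∑_{n ≥ 1} (∑_{i ≥ 1} c(n,i) yⁱ) xⁿ`, a formal power series in `x`
with coefficients in `ℤ[y]`. -/
noncomputable def Tser : PowerSeries (Polynomial ℤ) :=
  PowerSeries.mk fun n => if n = 0 then 0 else tpoly n

/-!
A 2-colored partition is the same thing as a 2-colouring `χ` of the vertices: its parts are the
connected components of the subgraph of monochromatic edges, so its size is the number of those
components. In `K₃ × Pₙ` every layer `K₃ × {t}` is a triangle. Ordering the vertices layer by
layer, a vertex is the least of its component iff it is the first of its colour in its layer and
no vertex of its colour class there keeps that colour in the layer below. So the size is a sum of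
terms depending on two consecutive layers, and the generating polynomial is a transfer-matrix
product over the 8 colourings of a layer. That matrix is lumpable onto the two classes
"monochromatic layer" / "bichromatic layer", giving `[[1 + y, 6y], [2, 3 + 2y + y²]]`; by
Cayley–Hamilton the polynomials satisfy the recurrence whose coefficients are its trace
`4 + 3y + y²` and determinant `3 - 7y + 3y² + y³`.
-/

open Finset Matrix

namespace SimpleGraph

variable {V α : Type*}

def sameColorGraph (G : SimpleGraph V) (χ : V → α) : SimpleGraph V where
  Adj v w := G.Adj v w ∧ χ v = χ w
  symm := ⟨fun _ _ h => ⟨h.1.symm, h.2.symm⟩⟩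
  loopless := ⟨fun v h => G.loopless.irrefl v h.1⟩

variable {G : SimpleGraph V}

@[simp]
theorem sameColorGraph_adj {χ : V → α} {v w : V} :
    (G.sameColorGraph χ).Adj v w ↔ G.Adj v w ∧ χ v = χ w := Iff.rfl

theorem sameColorGraph_le (χ : V → α) : G.sameColorGraph χ ≤ G := fun _ _ h => h.1

theorem Reachable.of_adj_invariant {P : V → Prop} (hP : ∀ x y, G.Adj x y → P x → P y)
    {v w : V} (h : G.Reachable v w) (hv : P v) : P w := by
  rw [reachable_iff_reflTransGen] at h
  induction h with
  | refl => exact hv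
  | tail _ hadj ih => exact hP _ _ hadj ih

theorem Reachable.eq_of_sameColorGraph {χ : V → α} {v w : V}
    (h : (G.sameColorGraph χ).Reachable v w) : χ v = χ w :=
  h.of_adj_invariant (P := fun x => χ v = χ x)
    (fun _ _ hxy hx => hx.trans (sameColorGraph_adj.1 hxy).2) rfl

theorem connected_induce_supp_sameColorGraph {χ : V → α}
    (C : (G.sameColorGraph χ).ConnectedComponent) : (G.induce C.supp).Connected :=
  C.maximal_connected_induce_supp.1.mono (comap_monotone _ (sameColorGraph_le χ))

theorem natCard_connectedComponent_eq_natCard_least {β : Type*} [Finite V] [LinearOrder β]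
    (H : SimpleGraph V) {key : V → β} (hkey : key.Injective) :
    Nat.card H.ConnectedComponent = Nat.card {v // ∀ w, H.Reachable v w → key v ≤ key w} := by
  refine (Nat.card_congr
    (Equiv.ofBijective (fun v => H.connectedComponentMk v.1) ⟨?_, ?_⟩)).symm
  · rintro ⟨v, hv⟩ ⟨w, hw⟩ h
    have hvw := ConnectedComponent.eq.1 h
    exact Subtype.ext (hkey (le_antisymm (hv w hvw) (hw v hvw.symm)))
  · intro C
    obtain ⟨v, hv, hmin⟩ := C.supp.exists_min_image key C.supp.toFinite C.nonempty_supp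
    refine ⟨⟨v, fun w hw => hmin w ?_⟩, hv⟩
    rw [ConnectedComponent.mem_supp_iff, ← hv, ConnectedComponent.eq]
    exact hw.symm

end SimpleGraph

theorem Polynomial.finsum_monomial_natCard_fiber {α R : Type*} [Fintype α] [CommSemiring R]
    (f : α → ℕ) (hf : ∀ x, 1 ≤ f x) :
    ∑ᶠ (i : ℕ) (_ : 1 ≤ i), monomial i (Nat.card {x // f x = i} : R) = ∑ x, X ^ f x := by
  classical
  rw [finsum_cond_eq_sum_of_cond_iff _ (t := univ.image f)]
  · rw [← sum_fiberwise_of_maps_to (g := f) (t := univ.image f)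
      (fun x _ => mem_image_of_mem f (mem_univ x))]
    refine sum_congr rfl fun i _ => ?_
    rw [sum_congr rfl fun x hx => by rw [(mem_filter.1 hx).2], sum_const, nsmul_eq_mul,
      Nat.card_eq_fintype_card, Fintype.card_subtype, ← C_mul_X_pow_eq_monomial]
    simp
  · intro i hi
    obtain ⟨⟨x, rfl⟩⟩ : Nonempty {x // f x = i} := by
      by_contra h
      simp_all
    simp [hf x]

theorem Matrix.sum_mul_prod_eq_dotProduct_pow_mulVec {S R : Type*} [Fintype S] [DecidableEq S]
    [CommSemiring R] (P : Matrix S S R) (m : ℕ) (a : S → R) :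
    ∑ g : Fin (m + 1) → S, a (g 0) * ∏ u : Fin m, P (g u.castSucc) (g u.succ) =
      a ⬝ᵥ (P ^ m *ᵥ 1) := by
  induction m generalizing a with
  | zero =>
    rw [pow_zero, one_mulVec, ← (Equiv.funUnique (Fin 1) S).symm.sum_comp]
    simp [dotProduct]
  | succ m ih =>
    rw [← (Fin.consEquiv fun _ => S).sum_comp, Fintype.sum_prod_type, pow_succ',
      ← mulVec_mulVec, dotProduct_mulVec, ← ih, Finset.sum_comm]
    refine sum_congr rfl fun g _ => ?_
    simp [Fin.prod_univ_succ, vecMul, dotProduct, sum_mul, mul_assoc]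

theorem Matrix.sq_eq_trace_smul_sub_det_smul {R : Type*} [CommRing R] [Nontrivial R]
    (M : Matrix (Fin 2) (Fin 2) R) : M ^ 2 = M.trace • M - M.det • 1 := by
  have h := aeval_self_charpoly M
  simp only [charpoly_fin_two, map_add, aeval_sub, map_pow, aeval_X, map_mul, aeval_C,
    Algebra.algebraMap_eq_smul_one, smul_mul_assoc, one_mul] at h
  rw [← sub_eq_zero, ← h]
  abel

section Lumping

variable {S K R : Type*} [Fintype S] [Fintype K] [DecidableEq K] {κ : S → K}

theorem Matrix.dotProduct_comp_eq_sum_fiber [NonUnitalNonAssocSemiring R] (a : S → R)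
    (v : K → R) : a ⬝ᵥ (v ∘ κ) = (fun j => ∑ s with κ s = j, a s) ⬝ᵥ v := by
  simp only [dotProduct, sum_mul, Function.comp_apply]
  rw [← sum_fiberwise univ κ]
  exact sum_congr rfl fun j _ => sum_congr rfl fun s hs => by rw [(mem_filter.1 hs).2]

theorem Matrix.mulVec_comp_of_sum_fiber [NonUnitalNonAssocSemiring R] {P : Matrix S S R}
    {Q : Matrix K K R} (h : ∀ s j, ∑ s' with κ s' = j, P s s' = Q (κ s) j) (v : K → R) :
    P *ᵥ (v ∘ κ) = (Q *ᵥ v) ∘ κ := by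
  funext s
  rw [Function.comp_apply, mulVec, mulVec, dotProduct_comp_eq_sum_fiber]
  simp only [dotProduct, h]

theorem Matrix.pow_mulVec_comp_of_sum_fiber [DecidableEq S] [Semiring R] {P : Matrix S S R}
    {Q : Matrix K K R} (h : ∀ s j, ∑ s' with κ s' = j, P s s' = Q (κ s) j) (m : ℕ)
    (v : K → R) : P ^ m *ᵥ (v ∘ κ) = (Q ^ m *ᵥ v) ∘ κ := by
  induction m with
  | zero => simp
  | succ m ih => rw [pow_succ', ← mulVec_mulVec, ih, mulVec_comp_of_sum_fiber h, mulVec_mulVec,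
      ← pow_succ']

end Lumping

theorem PowerSeries.one_sub_mul_mk_of_recurrence {R : Type*} [CommRing R] {t : ℕ → R}
    {A B u v : R} (h0 : t 0 = 0) (h1 : t 1 = u) (h2 : t 2 = A * u - v)
    (hrec : ∀ k, t (k + 3) = A * t (k + 2) - B * t (k + 1)) :
    (1 - C A * X + C B * X ^ 2) * mk t = C u * X - C v * X ^ 2 := by
  ext k
  rcases k with _ | _ | _ | k <;>
    simp [sub_mul, add_mul, mul_assoc, coeff_X_pow_mul', h0, h1, h2, hrec]

namespace TwoColoredPartition

variable {V : Type*} {G : SimpleGraph V}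

@[ext]
theorem ext {T T' : TwoColoredPartition G} (hparts : T.parts = T'.parts)
    (hcolor : ∀ p (hp : p ∈ T.parts) (hp' : p ∈ T'.parts),
      T.color ⟨p, hp⟩ = T'.color ⟨p, hp'⟩) :
    T = T' := by
  cases T; cases T'
  subst hparts
  congr
  exact funext fun p => hcolor p.1 p.2 p.2

def monochromaticComponents (G : SimpleGraph V) (χ : V → Fin 2) : Set (Set V) :=
  Set.range fun C : (G.sameColorGraph χ).ConnectedComponent => C.supp

section OfColoring

variable {χ : V → Fin 2} {p : Set V}

theorem eq_supp_of_mem_monochromaticComponents (hp : p ∈ monochromaticComponents G χ) {v : V}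
    (hv : v ∈ p) : p = ((G.sameColorGraph χ).connectedComponentMk v).supp := by
  obtain ⟨C, rfl⟩ := hp
  rw [(C.mem_supp_iff v).1 hv]

theorem eq_of_mem_monochromaticComponents (hp : p ∈ monochromaticComponents G χ) {v w : V}
    (hv : v ∈ p) (hw : w ∈ p) : χ v = χ w := by
  rw [eq_supp_of_mem_monochromaticComponents hp hv] at hw
  exact (ConnectedComponent.eq.1 hw).symm.eq_of_sameColorGraph

theorem out_choose_mem_monochromaticComponents (hp : p ∈ monochromaticComponents G χ) :
    hp.choose.out ∈ p := by
  have h : hp.choose.out ∈ hp.choose.supp := hp.choose.out_eq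
  exact hp.choose_spec.subset h

variable (G χ) in
noncomputable def ofColoring : TwoColoredPartition G where
  parts := monochromaticComponents G χ
  nonempty := by
    rintro _ ⟨C, rfl⟩
    exact C.nonempty_supp
  covers v := ⟨_, ⟨_, rfl⟩, ConnectedComponent.connectedComponentMk_mem⟩
  disj := by
    rintro _ ⟨C, rfl⟩ _ ⟨D, rfl⟩ hne
    exact pairwise_disjoint_supp_connectedComponent _ fun h => hne (h ▸ rfl)
  conn := by
    rintro _ ⟨C, rfl⟩
    exact connected_induce_supp_sameColorGraph C
  color p := χ p.2.choose.out
  proper := by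
    rintro ⟨p, hp⟩ ⟨q, hq⟩ hne ⟨v, hv, w, hw, hadj⟩ hcolor
    have hvw : χ v = χ w := calc
      χ v = χ hp.choose.out := eq_of_mem_monochromaticComponents hp hv
        (out_choose_mem_monochromaticComponents hp)
      _ = χ hq.choose.out := hcolor
      _ = χ w := eq_of_mem_monochromaticComponents hq
        (out_choose_mem_monochromaticComponents hq) hw
    refine hne (Subtype.ext ?_)
    change p = q
    rw [eq_supp_of_mem_monochromaticComponents hp hv, eq_supp_of_mem_monochromaticComponents hq hw,
      ConnectedComponent.connectedComponentMk_eq_of_adj (G := G.sameColorGraph χ) ⟨hadj, hvw⟩]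

theorem color_ofColoring (p : (ofColoring G χ).parts) {v : V} (hv : v ∈ (p : Set V)) :
    (ofColoring G χ).color p = χ v :=
  eq_of_mem_monochromaticComponents p.2 (out_choose_mem_monochromaticComponents p.2) hv

variable (χ) in
theorem size_ofColoring :
    (ofColoring G χ).size = Nat.card (G.sameColorGraph χ).ConnectedComponent :=
  Set.ncard_range_of_injective ConnectedComponent.supp_injective

end OfColoring

variable (T : TwoColoredPartition G)

theorem eq_of_mem_parts {p q : Set V} (hp : p ∈ T.parts) (hq : q ∈ T.parts) {v : V}
    (hvp : v ∈ p) (hvq : v ∈ q) : p = q :=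
  by_contra fun hne => Set.disjoint_left.1 (T.disj p hp q hq hne) hvp hvq

noncomputable def partOf (v : V) : T.parts :=
  ⟨(T.covers v).choose, (T.covers v).choose_spec.1⟩

theorem mem_partOf (v : V) : v ∈ (T.partOf v : Set V) :=
  (T.covers v).choose_spec.2

theorem partOf_eq {p : T.parts} {v : V} (hv : v ∈ (p : Set V)) : T.partOf v = p :=
  Subtype.ext (T.eq_of_mem_parts (T.partOf v).2 p.2 (T.mem_partOf v) hv)

noncomputable def coloring (v : V) : Fin 2 :=
  T.color (T.partOf v)

theorem eq_supp_of_mem_parts {p : Set V} (hp : p ∈ T.parts) {v : V} (hv : v ∈ p) :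
    p = ((G.sameColorGraph T.coloring).connectedComponentMk v).supp := by
  have coloring_eq {x : V} (hx : x ∈ p) : T.coloring x = T.color ⟨p, hp⟩ := by
    rw [coloring, T.partOf_eq (p := ⟨p, hp⟩) hx]
  ext w
  constructor
  · intro hw
    let φ : G.induce p →g G.sameColorGraph T.coloring :=
      ⟨Subtype.val, fun {x y} hxy => ⟨hxy, (coloring_eq x.2).trans (coloring_eq y.2).symm⟩⟩
    exact ConnectedComponent.eq.2 (((T.conn p hp).preconnected ⟨w, hw⟩ ⟨v, hv⟩).map φ)
  · intro hw
    refine (ConnectedComponent.eq.1 hw).symm.of_adj_invariant (P := (· ∈ p)) ?_ hv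
    intro x y hxy hx
    by_contra hy
    refine T.proper ⟨p, hp⟩ (T.partOf y) (fun h => hy (h ▸ T.mem_partOf y :))
      ⟨x, hx, y, T.mem_partOf y, hxy.1⟩ ?_
    exact (coloring_eq hx).symm.trans hxy.2

theorem coloring_ofColoring (χ : V → Fin 2) : (ofColoring G χ).coloring = χ :=
  funext fun v => color_ofColoring _ ((ofColoring G χ).mem_partOf v)

theorem ofColoring_coloring : ofColoring G T.coloring = T := by
  ext p hp hp'
  · constructor
    · rintro ⟨C, rfl⟩
      obtain ⟨v, hv⟩ := C.nonempty_supp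
      change C.supp ∈ T.parts
      rw [← (C.mem_supp_iff v).1 hv, ← T.eq_supp_of_mem_parts (T.partOf v).2 (T.mem_partOf v)]
      exact (T.partOf v).2
    · intro hp
      obtain ⟨v, hv⟩ := T.nonempty p hp
      rw [T.eq_supp_of_mem_parts hp hv]
      exact ⟨_, rfl⟩
  · obtain ⟨v, hv⟩ := T.nonempty p hp'
    rw [color_ofColoring ⟨p, hp⟩ hv, coloring, T.partOf_eq (p := ⟨p, hp'⟩) hv]

noncomputable def equivColoring : TwoColoredPartition G ≃ (V → Fin 2) where
  toFun := coloring
  invFun := ofColoring G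
  left_inv := ofColoring_coloring
  right_inv := coloring_ofColoring

theorem natCard_size_eq (i : ℕ) :
    Nat.card {T : TwoColoredPartition G // T.size = i} =
      Nat.card {χ : V → Fin 2 // Nat.card (G.sameColorGraph χ).ConnectedComponent = i} :=
  Nat.card_congr <| equivColoring.subtypeEquiv fun T => by
    rw [← size_ofColoring, equivColoring, Equiv.coe_fn_mk, ofColoring_coloring]

end TwoColoredPartition

abbrev LayerColoring := Fin 3 → Fin 2

def IsFirstOfColor (s : LayerColoring) (a : Fin 3) : Prop := ∀ b < a, s b ≠ s a

instance (s : LayerColoring) : DecidablePred (IsFirstOfColor s) :=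
  fun _ => inferInstanceAs (Decidable (∀ b < _, _))

def numColorClasses (s : LayerColoring) : ℕ := #{a | IsFirstOfColor s a}

/-- In `K₃ × Pₙ`, the number of monochromatic components whose lowest vertex lies in a layer
coloured `s'` on top of a layer coloured `s`. -/
def numNewColorClasses (s s' : LayerColoring) : ℕ :=
  #{a | IsFirstOfColor s' a ∧ ∀ b, s' b = s' a → s b ≠ s' a}

section PrismGraph

variable {n : ℕ}

abbrev prismGraph (n : ℕ) : SimpleGraph (Fin 3 × Fin n) :=
  (⊤ : SimpleGraph (Fin 3)) □ pathGraph n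

def layer (χ : Fin 3 × Fin n → Fin 2) (t : Fin n) : LayerColoring := fun a => χ (a, t)

def prismKey (v : Fin 3 × Fin n) : ℕ := 3 * v.2 + v.1

theorem prismKey_injective : (prismKey (n := n)).Injective := by
  rintro ⟨a, t⟩ ⟨b, u⟩ h
  simp only [prismKey] at h
  have := a.isLt; have := b.isLt
  simp only [Prod.mk.injEq, Fin.ext_iff]
  omega

variable {χ : Fin 3 × Fin n → Fin 2}

theorem reachable_sameColorGraph_of_layer {a b : Fin 3} {t : Fin n} (h : χ (a, t) = χ (b, t)) :
    ((prismGraph n).sameColorGraph χ).Reachable (a, t) (b, t) := by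
  rcases eq_or_ne a b with rfl | hab
  · rfl
  · exact Adj.reachable ⟨Or.inl ⟨hab, rfl⟩, h⟩

theorem adj_sameColorGraph_of_succ {a : Fin 3} {t t' : Fin n} (ht : t'.val + 1 = t.val)
    (h : χ (a, t) = χ (a, t')) : ((prismGraph n).sameColorGraph χ).Adj (a, t) (a, t') :=
  ⟨Or.inr ⟨pathGraph_adj.2 (Or.inr ht), rfl⟩, h⟩

theorem prismKey_least_iff {v : Fin 3 × Fin n} :
    (∀ w, ((prismGraph n).sameColorGraph χ).Reachable v w → prismKey v ≤ prismKey w) ↔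
      IsFirstOfColor (layer χ v.2) v.1 ∧
        ∀ b (t' : Fin n), t'.val + 1 = v.2.val → χ (b, v.2) = χ v →
          χ (b, t') ≠ χ v := by
  obtain ⟨a, t⟩ := v
  dsimp only
  constructor
  · intro hleast
    refine ⟨fun b hba hb => ?_, fun b t' ht' hb hb' => ?_⟩
    · have := hleast _ (reachable_sameColorGraph_of_layer hb.symm)
      simp only [prismKey] at this
      have := Fin.lt_def.1 hba
      omega
    · have := hleast _ ((reachable_sameColorGraph_of_layer hb.symm).trans
        (adj_sameColorGraph_of_succ ht' (hb.trans hb'.symm)).reachable)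
      simp only [prismKey] at this
      have := b.isLt
      omega
  · rintro ⟨hfirst, hbelow⟩ ⟨b, u⟩ hw
    -- going below layer `t` needs a monochromatic vertical edge out of it, excluded by `hbelow`
    have step : ∀ x y, ((prismGraph n).sameColorGraph χ).Adj x y →
        χ x = χ (a, t) ∧ t.val ≤ x.2.val → χ y = χ (a, t) ∧ t.val ≤ y.2.val := by
      rintro ⟨c, v⟩ ⟨c', v'⟩ ⟨hadj, hcc'⟩ ⟨hc, hv⟩
      refine ⟨hcc' ▸ hc, ?_⟩
      rcases hadj with ⟨-, rfl⟩ | ⟨hpath, rfl⟩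
      · exact hv
      · rcases pathGraph_adj.1 hpath with h | h
        · dsimp only at h hv ⊢
          omega
        · by_contra hlt
          have hvt : v = t := Fin.ext (by dsimp only at h hlt hv; omega)
          subst hvt
          exact hbelow c v' h hc (hcc'.symm.trans hc)
    obtain ⟨hcolor, hlayer⟩ := hw.of_adj_invariant step ⟨rfl, le_rfl⟩
    dsimp only [prismKey] at hlayer ⊢
    by_cases htu : t.val < u.val
    · have := a.isLt
      omega
    · obtain rfl : u = t := Fin.ext (by omega)
      have := Fin.le_def.1 (not_lt.1 fun hba => hfirst b hba hcolor)
      omega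

theorem natCard_connectedComponent_prismGraph {m : ℕ} (χ : Fin 3 × Fin (m + 1) → Fin 2) :
    Nat.card ((prismGraph (m + 1)).sameColorGraph χ).ConnectedComponent =
      numColorClasses (layer χ 0) +
        ∑ u : Fin m, numNewColorClasses (layer χ u.castSucc) (layer χ u.succ) := by
  classical
  rw [natCard_connectedComponent_eq_natCard_least _ prismKey_injective,
    Nat.card_congr (Equiv.subtypeEquivRight fun v => prismKey_least_iff),
    Nat.card_eq_fintype_card, Fintype.card_subtype, card_filter, Fintype.sum_prod_type_right,
    Fin.sum_univ_succ, numColorClasses, card_filter]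
  congr 1
  · refine sum_congr rfl fun a _ => if_congr ?_ rfl rfl
    simp
  · refine sum_congr rfl fun u _ => ?_
    rw [numNewColorClasses, card_filter]
    refine sum_congr rfl fun a _ => if_congr ?_ rfl rfl
    have below (t' : Fin (m + 1)) : t'.val + 1 = u.succ.val ↔ t' = u.castSucc := by
      simp [Fin.ext_iff]
    simp only [below, forall_eq]
    rfl

def layerEquiv (n : ℕ) : (Fin 3 × Fin n → Fin 2) ≃ (Fin n → LayerColoring) where
  toFun := layer
  invFun g v := g v.2 v.1
  left_inv _ := rfl
  right_inv _ := rfl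

end PrismGraph

def layerClass (s : LayerColoring) : Fin 2 := if s 0 = s 1 ∧ s 1 = s 2 then 0 else 1

-- The multiset of weights from `s` into a class depends only on the class of `s`: this is the
-- lumpability of `transferMatrix` along `layerClass`.
theorem map_numNewColorClasses_filter_layerClass (s : LayerColoring) (j : Fin 2) :
    (univ.filter fun s' => layerClass s' = j).val.map (numNewColorClasses s) =
      ![![{0, 1}, {1, 1, 1, 1, 1, 1}], ![{0, 0}, {0, 0, 0, 1, 1, 2}]] (layerClass s) j := by
  revert s j
  decide

theorem map_numColorClasses_filter_layerClass (j : Fin 2) :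
    (univ.filter fun s => layerClass s = j).val.map numColorClasses =
      ![{1, 1}, {2, 2, 2, 2, 2, 2}] j := by
  revert j
  decide

noncomputable def transferMatrix : Matrix LayerColoring LayerColoring ℤ[X] :=
  Matrix.of fun s s' => X ^ numNewColorClasses s s'

noncomputable def lumpedTransferMatrix : Matrix (Fin 2) (Fin 2) ℤ[X] :=
  !![1 + X, 6 * X; 2, 3 + 2 * X + X ^ 2]

theorem sum_transferMatrix_filter_layerClass (s : LayerColoring) (j : Fin 2) :
    ∑ s' with layerClass s' = j, transferMatrix s s' = lumpedTransferMatrix (layerClass s) j := by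
  simp only [transferMatrix, Matrix.of_apply]
  rw [sum_eq_multiset_sum, ← Function.comp_def (X ^ ·), ← Multiset.map_map,
    map_numNewColorClasses_filter_layerClass]
  generalize layerClass s = i
  fin_cases i <;> fin_cases j <;>
    simp only [Multiset.insert_eq_cons, Multiset.map_cons, Multiset.map_singleton,
      Multiset.sum_cons, Multiset.sum_singleton, pow_zero, pow_one, lumpedTransferMatrix, of_apply,
      cons_val', cons_val_zero, cons_val_one, cons_val_fin_one, Fin.zero_eta, Fin.mk_one] <;>
    ring

theorem sum_pow_numColorClasses_filter_layerClass (j : Fin 2) :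
    ∑ s with layerClass s = j, (X : ℤ[X]) ^ numColorClasses s = ![2 * X, 6 * X ^ 2] j := by
  rw [sum_eq_multiset_sum, ← Function.comp_def (X ^ ·), ← Multiset.map_map,
    map_numColorClasses_filter_layerClass]
  fin_cases j <;>
    simp only [Multiset.insert_eq_cons, Multiset.map_cons, Multiset.map_singleton,
      Multiset.sum_cons, Multiset.sum_singleton, pow_one, cons_val_zero, cons_val_one,
      cons_val_fin_one, Fin.zero_eta, Fin.mk_one] <;>
    ring

theorem tpoly_eq_sum_pow (n : ℕ) [NeZero n] :
    tpoly n = ∑ χ : Fin 3 × Fin n → Fin 2,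
      X ^ Nat.card ((prismGraph n).sameColorGraph χ).ConnectedComponent := by
  simp only [tpoly, c, TwoColoredPartition.natCard_size_eq]
  exact finsum_monomial_natCard_fiber _ fun χ => Nat.card_pos (α := ConnectedComponent _)

theorem tpoly_succ_eq_dotProduct (m : ℕ) :
    tpoly (m + 1) = ![2 * X, 6 * X ^ 2] ⬝ᵥ (lumpedTransferMatrix ^ m *ᵥ 1) := by
  have htransfer := sum_mul_prod_eq_dotProduct_pow_mulVec transferMatrix m
    fun s => X ^ numColorClasses s
  have hlump := pow_mulVec_comp_of_sum_fiber sum_transferMatrix_filter_layerClass m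
    (1 : Fin 2 → ℤ[X])
  calc tpoly (m + 1)
      = ∑ g : Fin (m + 1) → LayerColoring, X ^ numColorClasses (g 0) *
          ∏ u : Fin m, transferMatrix (g u.castSucc) (g u.succ) := by
        rw [tpoly_eq_sum_pow, ← (layerEquiv (m + 1)).symm.sum_comp]
        refine sum_congr rfl fun g _ => ?_
        rw [natCard_connectedComponent_prismGraph, pow_add, ← prod_pow_eq_pow_sum]
        rfl
    _ = (fun s => X ^ numColorClasses s) ⬝ᵥ (transferMatrix ^ m *ᵥ 1) := htransfer
    _ = ![2 * X, 6 * X ^ 2] ⬝ᵥ (lumpedTransferMatrix ^ m *ᵥ 1) := by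
        rw [show (1 : LayerColoring → ℤ[X]) = (1 : Fin 2 → ℤ[X]) ∘ layerClass from rfl,
          hlump, dotProduct_comp_eq_sum_fiber]
        simp only [sum_pow_numColorClasses_filter_layerClass]

theorem lumpedTransferMatrix_pow_add_two (k : ℕ) :
    lumpedTransferMatrix ^ (k + 2) =
      (4 + 3 * X + X ^ 2 : ℤ[X]) • lumpedTransferMatrix ^ (k + 1) -
        (3 - 7 * X + 3 * X ^ 2 + X ^ 3 : ℤ[X]) • lumpedTransferMatrix ^ k := by
  have htrace : lumpedTransferMatrix.trace = 4 + 3 * X + X ^ 2 := by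
    rw [lumpedTransferMatrix, trace_fin_two_of]
    ring
  have hdet : lumpedTransferMatrix.det = 3 - 7 * X + 3 * X ^ 2 + X ^ 3 := by
    rw [lumpedTransferMatrix, det_fin_two_of]
    ring
  rw [pow_add, sq_eq_trace_smul_sub_det_smul, htrace, hdet, mul_sub, mul_smul_comm, mul_smul_comm,
    mul_one, ← pow_succ]

theorem tpoly_one : tpoly 1 = 2 * X * (1 + 3 * X) := by
  rw [tpoly_succ_eq_dotProduct, pow_zero, one_mulVec]
  simp only [dotProduct, Pi.one_apply, mul_one, Fin.sum_univ_two, cons_val_zero, cons_val_one,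
    cons_val_fin_one]
  ring

theorem tpoly_two :
    tpoly 2 = (4 + 3 * X + X ^ 2) * (2 * X * (1 + 3 * X)) - 2 * X * (3 - 7 * X + 4 * X ^ 2) := by
  rw [tpoly_succ_eq_dotProduct, pow_one]
  simp only [dotProduct, mulVec, lumpedTransferMatrix, of_apply, Pi.one_apply, mul_one,
    Fin.sum_univ_two, cons_val', cons_val_zero, cons_val_one, cons_val_fin_one]
  ring

theorem tpoly_add_three (k : ℕ) :
    tpoly (k + 3) = (4 + 3 * X + X ^ 2) * tpoly (k + 2) -
      (3 - 7 * X + 3 * X ^ 2 + X ^ 3) * tpoly (k + 1) := by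
  rw [tpoly_succ_eq_dotProduct, tpoly_succ_eq_dotProduct, tpoly_succ_eq_dotProduct,
    lumpedTransferMatrix_pow_add_two, sub_mulVec, smul_mulVec, smul_mulVec,
    dotProduct_sub, dotProduct_smul, dotProduct_smul, smul_eq_mul, smul_eq_mul]

/-- `(1 - (4 + 3y + y²)x + (3 - 7y + 3y² + y³)x²) · T(x,y)
      = 2y(1 + 3y)·x - 2y(3 - 7y + 4y²)·x²`. -/
theorem genfun_K3_times_path :
    (1 - PowerSeries.C (R := Polynomial ℤ) (4 + 3 * Polynomial.X + Polynomial.X ^ 2) * PowerSeries.X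
        + PowerSeries.C (R := Polynomial ℤ) (3 - 7 * Polynomial.X + 3 * Polynomial.X ^ 2
            + Polynomial.X ^ 3) * PowerSeries.X ^ 2) * Tser
      = PowerSeries.C (R := Polynomial ℤ) (2 * Polynomial.X * (1 + 3 * Polynomial.X)) * PowerSeries.X
        - PowerSeries.C (R := Polynomial ℤ) (2 * Polynomial.X * (3 - 7 * Polynomial.X
            + 4 * Polynomial.X ^ 2)) * PowerSeries.X ^ 2 := by
  refine PowerSeries.one_sub_mul_mk_of_recurrence (t := fun n => if n = 0 then 0 else tpoly n)
    rfl ?_ ?_ fun k => ?_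
  · simpa using tpoly_one
  · simpa using tpoly_two
  · simpa using tpoly_add_three k
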